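/- Every $d$-SSM is a $\bar{d}$-separable matrix: if $M$ is a $t \times n$ binary matrix (with $n \ge d \ge 2$) that is a $d$-SSM, then the Boolean sums of all column subsets of size at most $d$ (and at least $1$) are pairwise distinct; i.e., if $\mathcal{F}_1, \mathcal{F}_2$ are subsets of columns with $1 \le |\mathcal{F}_1|, |\mathcal{F}_2| \le d$ and $\bigvee \mathcal{F}_1 = \bigvee \mathcal{F}_2$, then $\mathcal{F}_1 = \mathcal{F}_2$. -/

import Mathlib

/-! A set `F₀` of at most `d` columns of `F` can be padded to a `d`-subset `D` of `F`. If `F'` has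
the same Boolean sum as `F₀`, then `F' ∪ (D \ F₀)` has the same Boolean sum as `D`, so the SSM
property gives `D ⊆ F' ∪ (D \ F₀)`, i.e. `F₀ ⊆ F'`. By symmetry, equal sums force equal sets. -/

noncomputable def boolSum {t : ℕ} (F : Finset (Fin t → Bool)) : Fin t → Bool := F.sup id

def IsSSM {t : ℕ} (F : Finset (Fin t → Bool)) (d : ℕ) : Prop :=
  ∀ F0 ⊆ F, F0.card = d →
    {c : Fin t → Bool | ∀ F' ⊆ F, boolSum F' = boolSum F0 → c ∈ F'} = (F0 : Set (Fin t → Bool))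

lemma boolSum_union {t : ℕ} (s u : Finset (Fin t → Bool)) :
    boolSum (s ∪ u) = boolSum s ⊔ boolSum u :=
  Finset.sup_union

namespace IsSSM

variable {t d : ℕ} {F : Finset (Fin t → Bool)}

lemma subset_of_boolSum_eq (hssm : IsSSM F d) {D G : Finset (Fin t → Bool)} (hD : D ⊆ F)
    (hDd : D.card = d) (hG : G ⊆ F) (h : boolSum G = boolSum D) : D ⊆ G := by
  intro c hc
  have hmem : c ∈ {c : Fin t → Bool | ∀ F' ⊆ F, boolSum F' = boolSum D → c ∈ F'} := by
    rw [hssm D hD hDd]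
    exact hc
  exact hmem G hG h

lemma subset_of_boolSum_eq_of_card_le (hssm : IsSSM F d) (hdF : d ≤ F.card)
    {F₀ F' : Finset (Fin t → Bool)} (hF₀ : F₀ ⊆ F) (hF₀d : F₀.card ≤ d) (hF' : F' ⊆ F)
    (h : boolSum F' = boolSum F₀) : F₀ ⊆ F' := by
  obtain ⟨D, hF₀D, hDF, hDd⟩ := Finset.exists_subsuperset_card_eq hF₀ hF₀d hdF
  have hsum : boolSum (F' ∪ (D \ F₀)) = boolSum D := by
    rw [boolSum_union, h, ← boolSum_union, Finset.union_sdiff_of_subset hF₀D]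
  have hD : D ⊆ F' ∪ (D \ F₀) :=
    hssm.subset_of_boolSum_eq hDF hDd
      (Finset.union_subset hF' (Finset.sdiff_subset.trans hDF)) hsum
  intro c hc
  rcases Finset.mem_union.mp (hD (hF₀D hc)) with hcF' | hcD
  · exact hcF'
  · exact absurd hc (Finset.mem_sdiff.mp hcD).2

end IsSSM

theorem ssm_isSeparable_general {t n d : ℕ} (hn : d ≤ n)
    (F : Finset (Fin t → Bool)) (hcard : F.card = n) (hssm : IsSSM F d) :
    ∀ F1 ⊆ F, ∀ F2 ⊆ F, 1 ≤ F1.card → F1.card ≤ d → 1 ≤ F2.card → F2.card ≤ d →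
      boolSum F1 = boolSum F2 → F1 = F2 := by
  intro F1 hF1 F2 hF2 _ hF1d _ hF2d hsum
  have hdF : d ≤ F.card := hcard ▸ hn
  exact le_antisymm
    (hssm.subset_of_boolSum_eq_of_card_le hdF hF1 hF1d hF2 hsum.symm)
    (hssm.subset_of_boolSum_eq_of_card_le hdF hF2 hF2d hF1 hsum)

/-- Every `d`-SSM is a `d̄`-separable matrix: Boolean sums of column subsets of
size between `1` and `d` are pairwise distinct. -/
theorem ssm_isSeparable {t n d : ℕ} (hd : 2 ≤ d) (hn : d ≤ n)
    (F : Finset (Fin t → Bool)) (hcard : F.card = n) (hssm : IsSSM F d) :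
    ∀ F1 ⊆ F, ∀ F2 ⊆ F, 1 ≤ F1.card → F1.card ≤ d → 1 ≤ F2.card → F2.card ≤ d →
      boolSum F1 = boolSum F2 → F1 = F2 :=
  ssm_isSeparable_general hn F hcard hssm
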